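/- arXiv:1612.04996 — 4 statements merged into one kernel-verified Lean document; each statement's English description precedes it below -/
import Mathlib

section
/- For any two Fourier frequencies ω_k, ω_l, the L²([0,1]²,ℂ)-inner product of the periodogram kernels satisfies ⟨p_{ω_k}, p_{ω_l}⟩ = |⟨x̃_{ω_k}, x̃_{ω_l}⟩|², where ⟨·,·⟩ on the right is the L²([0,1],ℂ)-inner product. Consequently the test statistic M̂²_T := 2π ∫₀¹∫₀¹ ( S_{T,2}(τ,σ) − S_{T,1}(τ,σ)·conj(S_{T,1}(τ,σ)) ) dτ dσ satisfies M̂²_T = 2π [ (2/T) ∑_{k=2}^{⌊T/2⌋} |⟨x̃_{ω_k}, x̃_{ω_{k−1}}⟩|² − ‖S_{T,1}‖₂² ]; in particular M̂²_T is a real number. -/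
open MeasureTheory Real
open scoped ComplexConjugate

noncomputable section

/-! Since the data are real, `x̃_{-ω} = conj x̃_ω`, so `p_ω(τ,σ) = x̃_ω(τ) conj x̃_ω(σ)` is a rank-one
kernel, and `p_{ω_k} conj p_{ω_l}` is again rank one, built from `F = x̃_{ω_k} conj x̃_{ω_l}`:
its double integral is `(∫ F) conj (∫ F) = |⟨x̃_{ω_k}, x̃_{ω_l}⟩|²`. The integrand
`S_{T,1} conj S_{T,1} = |S_{T,1}|²` is real pointwise. Splitting the double integral of the
difference is legitimate because tensor products of `L²` functions are `L²` on the square, so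
both `S_{T,2}` and `|S_{T,1}|²` are integrable there. -/

theorem rankOne_mul_conj_rankOne {α 𝕜 : Type*} [RCLike 𝕜] (f g : α → 𝕜) (τ σ : α) :
    f τ * conj (f σ) * conj (g τ * conj (g σ)) = f τ * conj (g τ) * conj (f σ * conj (g σ)) := by
  simp only [map_mul, RCLike.conj_conj]; ring

namespace MeasureTheory

variable {α β E 𝕜 : Type*} [RCLike 𝕜] [MeasurableSpace α] [MeasurableSpace β] {μ : Measure α}
  {ν : Measure β} [NormedAddCommGroup E] [NormedSpace ℝ E]

theorem MemLp.mul_prod [SFinite ν] {f : α → 𝕜} {g : β → 𝕜} (hf : MemLp f 2 μ)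
    (hg : MemLp g 2 ν) : MemLp (fun z : α × β => f z.1 * g z.2) 2 (μ.prod ν) := by
  refine (memLp_two_iff_integrable_sq_norm (hf.1.comp_fst.mul hg.1.comp_snd)).2 ?_
  simpa only [Pi.mul_apply, norm_mul, mul_pow] using
    (hf.integrable_norm_pow two_ne_zero).mul_prod (hg.integrable_norm_pow two_ne_zero)

theorem Integrable.conj {f : α → 𝕜} (hf : Integrable f μ) :
    Integrable (fun x => conj (f x)) μ :=
  memLp_one_iff_integrable.1 (memLp_one_iff_integrable.2 hf).star

theorem integral_integral_finsetSum [SFinite μ] [SFinite ν] {ι : Type*} (s : Finset ι)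
    {F : ι → α → β → E} (hF : ∀ i ∈ s, Integrable (fun z => F i z.1 z.2) (μ.prod ν)) :
    ∫ x, ∫ y, ∑ i ∈ s, F i x y ∂ν ∂μ = ∑ i ∈ s, ∫ x, ∫ y, F i x y ∂ν ∂μ := by
  calc ∫ x, ∫ y, ∑ i ∈ s, F i x y ∂ν ∂μ = ∫ z, ∑ i ∈ s, F i z.1 z.2 ∂μ.prod ν :=
        (integral_prod _ (integrable_finsetSum s hF)).symm
    _ = ∑ i ∈ s, ∫ z, F i z.1 z.2 ∂μ.prod ν := integral_finsetSum s hF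
    _ = ∑ i ∈ s, ∫ x, ∫ y, F i x y ∂ν ∂μ :=
        Finset.sum_congr rfl fun i hi => integral_prod _ (hF i hi)

theorem integral_integral_mul_conj (F : α → β → 𝕜) :
    ∫ x, ∫ y, F x y * conj (F x y) ∂ν ∂μ = ((∫ x, ∫ y, ‖F x y‖ ^ 2 ∂ν ∂μ : ℝ) : 𝕜) := by
  simp_rw [RCLike.mul_conj, ← RCLike.ofReal_pow, integral_ofReal]

theorem integral_integral_rankOne_mul_conj_rankOne (f g : α → 𝕜) :
    ∫ τ, ∫ σ, f τ * conj (f σ) * conj (g τ * conj (g σ)) ∂μ ∂μ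
      = (‖∫ τ, f τ * conj (g τ) ∂μ‖ : 𝕜) ^ 2 := by
  simp_rw [rankOne_mul_conj_rankOne f g, integral_const_mul, integral_conj, integral_mul_const,
    RCLike.mul_conj]

theorem integrable_rankOne_mul_conj_rankOne [SFinite μ] {f g : α → 𝕜} (hf : MemLp f 2 μ)
    (hg : MemLp g 2 μ) :
    Integrable (fun z : α × α => f z.1 * conj (f z.2) * conj (g z.1 * conj (g z.2)))
      (μ.prod μ) := by
  have hfg : Integrable (fun τ => f τ * conj (g τ)) μ := hf.integrable_mul hg.star
  simp_rw [rankOne_mul_conj_rankOne f g]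
  exact hfg.mul_prod hfg.conj

theorem integral_integral_sum_rankOne_mul_conj_rankOne [SFinite μ] {ι : Type*} (s : Finset ι)
    (c : 𝕜) {f g : ι → α → 𝕜} (hf : ∀ i ∈ s, MemLp (f i) 2 μ) (hg : ∀ i ∈ s, MemLp (g i) 2 μ) :
    ∫ τ, ∫ σ, c * ∑ i ∈ s, f i τ * conj (f i σ) * conj (g i τ * conj (g i σ)) ∂μ ∂μ
      = c * ∑ i ∈ s, (‖∫ τ, f i τ * conj (g i τ) ∂μ‖ : 𝕜) ^ 2 := by
  simp_rw [integral_const_mul]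
  rw [integral_integral_finsetSum s fun i hi =>
    integrable_rankOne_mul_conj_rankOne (hf i hi) (hg i hi)]
  simp_rw [integral_integral_rankOne_mul_conj_rankOne]

end MeasureTheory

theorem conj_dft_of_real (s : Finset ℕ) (x : ℕ → ℝ) (c ω : ℝ) :
    conj ((c : ℂ) * ∑ t ∈ s, (x t : ℂ) * Complex.exp (-(Complex.I * ω * t)))
      = (c : ℂ) * ∑ t ∈ s, (x t : ℂ) * Complex.exp (-(Complex.I * (-ω : ℝ) * t)) := by
  simp only [map_mul, map_sum, Complex.conj_ofReal, ← Complex.exp_conj, map_neg,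
    Complex.conj_I, Complex.conj_natCast, Complex.ofReal_neg]
  ring_nf

theorem memLp_dft_of_real {α : Type*} [MeasurableSpace α] {μ : Measure α} {p : ENNReal}
    {s : Finset ℕ} {x : ℕ → α → ℝ} (hx : ∀ t ∈ s, MemLp (x t) p μ) (c : ℂ) (z : ℕ → ℂ) :
    MemLp (fun τ => c * ∑ t ∈ s, (x t τ : ℂ) * z t) p μ :=
  (memLp_finsetSum s fun t ht => (hx t ht).ofReal.mul_const (z t)).const_mul c

theorem test_statistic_real_representation_general
    (T : ℕ)
    (x : ℕ → ℝ → ℝ)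
    (hx : ∀ t < T, MemLp (x t) 2 ((volume : Measure ℝ).restrict (Set.Icc 0 1)))
    (xt : ℝ → ℝ → ℂ)
    (hxt : ∀ (ω τ : ℝ), xt ω τ = (1 / Real.sqrt (2 * π * T) : ℝ) *
      ∑ t ∈ Finset.range T, (x t τ : ℂ) * Complex.exp (-(Complex.I * ω * t)))
    (p : ℝ → ℝ → ℝ → ℂ)
    (hp : ∀ (ω τ σ : ℝ), p ω τ σ = xt ω τ * xt (-ω) σ)
    (S1 S2 : ℝ → ℝ → ℂ)
    (hS1 : ∀ τ σ : ℝ, S1 τ σ = (1 / (T : ℂ)) *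
      ∑ k ∈ Finset.Icc 1 (T / 2), (p (2 * π * k / T) τ σ + conj (p (2 * π * k / T) τ σ)))
    (hS2 : ∀ τ σ : ℝ, S2 τ σ = (2 / (T : ℂ)) *
      ∑ k ∈ Finset.Icc 2 (T / 2),
        p (2 * π * k / T) τ σ * conj (p (2 * π * ((k : ℝ) - 1) / T) τ σ))
    (Mhat : ℂ)
    (hMhat : Mhat = 2 * π *
      ∫ τ in Set.Icc (0 : ℝ) 1, ∫ σ in Set.Icc (0 : ℝ) 1,
        (S2 τ σ - S1 τ σ * conj (S1 τ σ))) :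
    (∀ k l : ℤ,
      (∫ τ in Set.Icc (0 : ℝ) 1, ∫ σ in Set.Icc (0 : ℝ) 1,
          p (2 * π * k / T) τ σ * conj (p (2 * π * l / T) τ σ))
        = ((‖∫ τ in Set.Icc (0 : ℝ) 1,
            xt (2 * π * k / T) τ * conj (xt (2 * π * l / T) τ)‖ : ℝ) ^ 2 : ℂ))
    ∧ Mhat = 2 * π *
        ((2 / (T : ℂ)) * ∑ k ∈ Finset.Icc 2 (T / 2),
            ((‖∫ τ in Set.Icc (0 : ℝ) 1,
                xt (2 * π * k / T) τ * conj (xt (2 * π * ((k : ℝ) - 1) / T) τ)‖ : ℝ) ^ 2 : ℂ)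
          - ((∫ τ in Set.Icc (0 : ℝ) 1, ∫ σ in Set.Icc (0 : ℝ) 1,
                ‖S1 τ σ‖ ^ 2 : ℝ) : ℂ))
    ∧ Mhat.im = 0 := by
  set μ : Measure ℝ := (volume : Measure ℝ).restrict (Set.Icc 0 1)
  have hmem : ∀ ω, MemLp (xt ω) 2 μ := fun ω => by
    rw [funext (hxt ω)]
    exact memLp_dft_of_real (fun t ht => hx t (Finset.mem_range.mp ht)) _ _
  have hp' : ∀ ω τ σ, p ω τ σ = xt ω τ * conj (xt ω σ) := fun ω τ σ => by
    rw [hp, hxt ω σ, conj_dft_of_real, ← hxt]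
  have hS1int : MemLp (fun z : ℝ × ℝ => S1 z.1 z.2) 2 (μ.prod μ) := by
    simp only [hS1, hp']
    exact (memLp_finsetSum _ fun k _ =>
      ((hmem _).mul_prod (hmem _).star).add ((hmem _).mul_prod (hmem _).star).star).const_mul _
  have hS1sq : Integrable (fun z : ℝ × ℝ => S1 z.1 z.2 * conj (S1 z.1 z.2)) (μ.prod μ) :=
    hS1int.integrable_mul hS1int.star
  have hS2int : Integrable (fun z : ℝ × ℝ => S2 z.1 z.2) (μ.prod μ) := by
    simp only [hS2, hp']
    exact (integrable_finsetSum _ fun k _ =>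
      integrable_rankOne_mul_conj_rankOne (hmem _) (hmem _)).const_mul _
  refine ⟨fun k l => ?_, (and_iff_left_of_imp fun hM => ?_).2 ?_⟩
  · simp only [hp']
    exact integral_integral_rankOne_mul_conj_rankOne _ _
  · rw [hM]
    simp [Complex.mul_im, ← Complex.ofReal_pow]
  · rw [hMhat]
    congr 1
    refine (integral_integral_sub hS2int hS1sq).trans ?_
    rw [integral_integral_mul_conj]
    simp only [hS2, hp']
    rw [integral_integral_sum_rankOne_mul_conj_rankOne _ _ (fun _ _ => hmem _)
      (fun _ _ => hmem _)]
    rfl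

/-- For data `x₀, …, x_{T-1} ∈ L²([0,1], ℝ)` with functional discrete Fourier transform
`x̃_ω = (2πT)^{-1/2} ∑_{t=0}^{T-1} x_t e^{-iωt}`, periodogram kernel
`p_ω(τ,σ) = x̃_ω(τ) x̃_{-ω}(σ)` and Fourier frequencies `ω_k = 2πk/T`, one has
`⟨p_{ω_k}, p_{ω_l}⟩ = |⟨x̃_{ω_k}, x̃_{ω_l}⟩|²` for any Fourier frequencies, and consequently
the statistic `M̂²_T = 2π ∫₀¹∫₀¹ (S_{T,2} − S_{T,1} conj S_{T,1})` satisfies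
`M̂²_T = 2π [(2/T) ∑_{k=2}^{⌊T/2⌋} |⟨x̃_{ω_k}, x̃_{ω_{k-1}}⟩|² − ‖S_{T,1}‖₂²]`; in particular
`M̂²_T` is real. -/
theorem test_statistic_real_representation
    (T : ℕ) (hT : 1 ≤ T)
    (x : ℕ → ℝ → ℝ)
    (hx : ∀ t < T, MemLp (x t) 2 ((volume : Measure ℝ).restrict (Set.Icc 0 1)))
    (xt : ℝ → ℝ → ℂ)
    (hxt : ∀ (ω τ : ℝ), xt ω τ = (1 / Real.sqrt (2 * π * T) : ℝ) *
      ∑ t ∈ Finset.range T, (x t τ : ℂ) * Complex.exp (-(Complex.I * ω * t)))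
    (p : ℝ → ℝ → ℝ → ℂ)
    (hp : ∀ (ω τ σ : ℝ), p ω τ σ = xt ω τ * xt (-ω) σ)
    (S1 S2 : ℝ → ℝ → ℂ)
    (hS1 : ∀ τ σ : ℝ, S1 τ σ = (1 / (T : ℂ)) *
      ∑ k ∈ Finset.Icc 1 (T / 2), (p (2 * π * k / T) τ σ + conj (p (2 * π * k / T) τ σ)))
    (hS2 : ∀ τ σ : ℝ, S2 τ σ = (2 / (T : ℂ)) *
      ∑ k ∈ Finset.Icc 2 (T / 2),
        p (2 * π * k / T) τ σ * conj (p (2 * π * ((k : ℝ) - 1) / T) τ σ))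
    (Mhat : ℂ)
    (hMhat : Mhat = 2 * π *
      ∫ τ in Set.Icc (0 : ℝ) 1, ∫ σ in Set.Icc (0 : ℝ) 1,
        (S2 τ σ - S1 τ σ * conj (S1 τ σ))) :
    (∀ k l : ℤ,
      (∫ τ in Set.Icc (0 : ℝ) 1, ∫ σ in Set.Icc (0 : ℝ) 1,
          p (2 * π * k / T) τ σ * conj (p (2 * π * l / T) τ σ))
        = ((‖∫ τ in Set.Icc (0 : ℝ) 1,
            xt (2 * π * k / T) τ * conj (xt (2 * π * l / T) τ)‖ : ℝ) ^ 2 : ℂ))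
    ∧ Mhat = 2 * π *
        ((2 / (T : ℂ)) * ∑ k ∈ Finset.Icc 2 (T / 2),
            ((‖∫ τ in Set.Icc (0 : ℝ) 1,
                xt (2 * π * k / T) τ * conj (xt (2 * π * ((k : ℝ) - 1) / T) τ)‖ : ℝ) ^ 2 : ℂ)
          - ((∫ τ in Set.Icc (0 : ℝ) 1, ∫ σ in Set.Icc (0 : ℝ) 1,
                ‖S1 τ σ‖ ^ 2 : ℝ) : ℂ))
    ∧ Mhat.im = 0 :=
  test_statistic_real_representation_general T x hx xt hxt p hp S1 S2 hS1 hS2 Mhat hMhat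
end
end

section
/- For every T ≥ 1 and all frequencies ω, λ ∈ ℝ, the periodograms satisfy E|p_ω · p_λ| ≤ 7Q / ((2π)² T), where Q := ∑_{t₁,t₂,t₃∈ℤ} |E[Y_{t₁} Z_{t₂} Y_{t₃} Z_0]| is assumed finite. -/
/-!
Expanding `‖p θ‖²` as a quadruple sum over time indices and integrating term by term bounds
`E‖p θ‖²` by `(2πT)⁻² ∑_{t₁,…,t₄ < T} |E[Y_{t₁} Z_{t₂} Y_{t₃} Z_{t₄}]|`, since every Fourier
weight has modulus one. By stationarity each term depends only on the differences `tᵢ - t₄`, so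
for fixed `t₄` the remaining triple sum is at most `Q`, and `E‖p θ‖² ≤ Q / ((2π)² T)`. The
AM–GM inequality `‖p ω * p λ‖ ≤ (‖p ω‖² + ‖p λ‖²) / 2` finishes the proof.
-/

open MeasureTheory Real Finset
open scoped ComplexConjugate

noncomputable section

theorem Finset.sum_mul_sum_eq_sum_product {R ι κ : Type*} [NonUnitalNonAssocSemiring R]
    (s : Finset ι) (t : Finset κ) (f : ι → R) (g : κ → R) :
    (∑ i ∈ s, f i) * ∑ j ∈ t, g j = ∑ p ∈ s ×ˢ t, f p.1 * g p.2 := by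
  rw [sum_product, sum_mul_sum]

theorem Complex.ofReal_norm_sq_sum_mul_sum {ι : Type*} (s : Finset ι) (α β : ι → ℝ)
    (u v : ι → ℂ) :
    ((‖(∑ t ∈ s, (α t : ℂ) * u t) * ∑ t ∈ s, (β t : ℂ) * v t‖ ^ 2 : ℝ) : ℂ) =
      ∑ q ∈ s ×ˢ s ×ˢ s ×ˢ s, ((α q.1 * β q.2.1 * α q.2.2.1 * β q.2.2.2 : ℝ) : ℂ) *
        (u q.1 * v q.2.1 * conj (u q.2.2.1) * conj (v q.2.2.2)) := by
  rw [Complex.ofReal_pow, ← Complex.mul_conj', map_mul, map_sum, map_sum, mul_assoc,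
    sum_mul_sum_eq_sum_product, sum_mul_sum_eq_sum_product, sum_mul_sum_eq_sum_product]
  refine sum_congr rfl fun q _ => ?_
  simp only [map_mul, Complex.conj_ofReal]
  push_cast
  ring

theorem MeasureTheory.integrable_mul_mul_mul_of_memLp_four {Ω : Type*} [MeasurableSpace Ω]
    {μ : Measure Ω} {f g h k : Ω → ℝ} (hf : MemLp f 4 μ) (hg : MemLp g 4 μ)
    (hh : MemLp h 4 μ) (hk : MemLp k 4 μ) : Integrable (fun x => f x * g x * h x * k x) μ := by
  have : ENNReal.HolderTriple 4 4 2 := ⟨by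
    rw [show (4 : ENNReal) = 2 * 2 by norm_num, ENNReal.mul_inv (by simp) (by simp), ← add_mul,
      ENNReal.inv_two_add_inv_two, one_mul]⟩
  rw [← memLp_one_iff_integrable]
  simpa only [mul_assoc] using (hk.mul' hh (r := 2)).mul' (hg.mul' hf (r := 2)) (r := 1)

section FourthMoments

variable {Ω ι : Type*} [MeasurableSpace Ω] {μ : Measure Ω} (s : Finset ι) {a b : ι → Ω → ℝ}
  (u v : ι → ℂ)

theorem integrable_norm_sq_sum_mul_sum
    (hint : ∀ t₁ t₂ t₃ t₄, Integrable (fun x => a t₁ x * b t₂ x * a t₃ x * b t₄ x) μ) :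
    Integrable (fun x => ‖(∑ t ∈ s, (a t x : ℂ) * u t) * ∑ t ∈ s, (b t x : ℂ) * v t‖ ^ 2)
      μ := by
  have : Integrable (fun x =>
      ((‖(∑ t ∈ s, (a t x : ℂ) * u t) * ∑ t ∈ s, (b t x : ℂ) * v t‖ ^ 2 : ℝ) : ℂ)) μ := by
    simp_rw [Complex.ofReal_norm_sq_sum_mul_sum]
    exact integrable_finsetSum _ fun q _ => (hint _ _ _ _).ofReal.mul_const _
  simpa only [RCLike.re_to_complex, Complex.ofReal_re] using this.re

theorem integral_norm_sq_sum_mul_sum_le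
    (hint : ∀ t₁ t₂ t₃ t₄, Integrable (fun x => a t₁ x * b t₂ x * a t₃ x * b t₄ x) μ)
    (hu : ∀ t, ‖u t‖ ≤ 1) (hv : ∀ t, ‖v t‖ ≤ 1) :
    ∫ x, ‖(∑ t ∈ s, (a t x : ℂ) * u t) * ∑ t ∈ s, (b t x : ℂ) * v t‖ ^ 2 ∂μ ≤
      ∑ q ∈ s ×ˢ s ×ˢ s ×ˢ s, |∫ x, a q.1 x * b q.2.1 x * a q.2.2.1 x * b q.2.2.2 x ∂μ| := by
  set F : Ω → ℂ := fun x => (∑ t ∈ s, (a t x : ℂ) * u t) * ∑ t ∈ s, (b t x : ℂ) * v t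
  have hexp : ((∫ x, ‖F x‖ ^ 2 ∂μ : ℝ) : ℂ) = ∑ q ∈ s ×ˢ s ×ˢ s ×ˢ s,
      ((∫ x, a q.1 x * b q.2.1 x * a q.2.2.1 x * b q.2.2.2 x ∂μ : ℝ) : ℂ) *
        (u q.1 * v q.2.1 * conj (u q.2.2.1) * conj (v q.2.2.2)) := by
    rw [← integral_complex_ofReal]
    simp_rw [F, Complex.ofReal_norm_sq_sum_mul_sum]
    rw [integral_finsetSum _ fun q _ => (hint _ _ _ _).ofReal.mul_const _]
    simp_rw [integral_mul_const, integral_complex_ofReal]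
  have hweight : ∀ q : ι × ι × ι × ι,
      ‖u q.1 * v q.2.1 * conj (u q.2.2.1) * conj (v q.2.2.2)‖ ≤ 1 := fun q => by
    simp only [norm_mul, Complex.norm_conj]
    exact mul_le_one₀ (mul_le_one₀ (mul_le_one₀ (hu _) (norm_nonneg _) (hv _))
      (by positivity) (hu _)) (by positivity) (hv _)
  calc ∫ x, ‖F x‖ ^ 2 ∂μ = ‖((∫ x, ‖F x‖ ^ 2 ∂μ : ℝ) : ℂ)‖ := by
        rw [Complex.norm_real, Real.norm_of_nonneg (integral_nonneg fun _ => by positivity)]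
    _ ≤ _ := by
        rw [hexp]
        refine (norm_sum_le _ _).trans (sum_le_sum fun q _ => ?_)
        rw [norm_mul, Complex.norm_real, Real.norm_eq_abs]
        exact mul_le_of_le_one_right (abs_nonneg _) (hweight q)

end FourthMoments

theorem sum_fourfold_sub_le_card_mul_tsum {g : ℤ × ℤ × ℤ → ℝ} (hg : Summable g)
    (hg₀ : ∀ z, 0 ≤ g z) (s : Finset ℕ) :
    ∑ q ∈ s ×ˢ s ×ˢ s ×ˢ s,
        g ((q.1 : ℤ) - q.2.2.2, (q.2.1 : ℤ) - q.2.2.2, (q.2.2.1 : ℤ) - q.2.2.2) ≤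
      #s * ∑' z, g z := by
  set shift : ℕ × ℕ × ℕ × ℕ → ℤ × ℤ × ℤ :=
    fun q => ((q.1 : ℤ) - q.2.2.2, (q.2.1 : ℤ) - q.2.2.2, (q.2.2.1 : ℤ) - q.2.2.2)
  have hfiber :
      ∀ t ∈ s, ∑ q ∈ s ×ˢ s ×ˢ s ×ˢ s with q.2.2.2 = t, g (shift q) ≤ ∑' z, g z := by
    intro t _
    rw [← sum_image fun q hq q' hq' h => ?_]
    · exact hg.sum_le_tsum _ fun z _ => hg₀ z
    · simp only [mem_coe, mem_filter, shift, Prod.mk.injEq] at hq hq' h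
      ext <;> omega
  rw [← sum_fiberwise_of_maps_to (g := fun q => q.2.2.2) (t := s) fun q hq => by
    simp only [mem_product] at hq; exact hq.2.2.2]
  simpa using sum_le_card_nsmul s _ _ hfiber

theorem integral_norm_mul_le_of_integral_norm_sq_le {Ω R : Type*} [MeasurableSpace Ω]
    {μ : Measure Ω} [NonUnitalSeminormedRing R] {f g : Ω → R} {B : ℝ}
    (hf : Integrable (fun x => ‖f x‖ ^ 2) μ) (hg : Integrable (fun x => ‖g x‖ ^ 2) μ)
    (hfB : ∫ x, ‖f x‖ ^ 2 ∂μ ≤ B) (hgB : ∫ x, ‖g x‖ ^ 2 ∂μ ≤ B) :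
    ∫ x, ‖f x * g x‖ ∂μ ≤ B := by
  have hamgm : ∀ x, ‖f x * g x‖ ≤ (‖f x‖ ^ 2 + ‖g x‖ ^ 2) / 2 := fun x => by
    nlinarith [norm_mul_le (f x) (g x), sq_nonneg (‖f x‖ - ‖g x‖)]
  calc ∫ x, ‖f x * g x‖ ∂μ ≤ ∫ x, (‖f x‖ ^ 2 + ‖g x‖ ^ 2) / 2 ∂μ :=
        integral_mono_of_nonneg (.of_forall fun _ => norm_nonneg _) ((hf.add hg).div_const 2)
          (.of_forall hamgm)
    _ = ((∫ x, ‖f x‖ ^ 2 ∂μ) + ∫ x, ‖g x‖ ^ 2 ∂μ) / 2 := by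
        rw [integral_div, integral_add hf hg]
    _ ≤ B := by linarith

def fourierSum {Ω : Type*} (T : ℕ) (X : ℤ → Ω → ℝ) (ω : ℝ) (x : Ω) : ℂ :=
  ∑ t ∈ range T, (X t x : ℂ) * Complex.exp (-(Complex.I * ω * t))

theorem norm_exp_neg_I_mul_mul_natCast (ω : ℝ) (t : ℕ) :
    ‖Complex.exp (-(Complex.I * ω * t))‖ = 1 := by
  rw [show -(Complex.I * ω * t) = ((-(ω * t) : ℝ) : ℂ) * Complex.I by push_cast; ring]
  exact Complex.norm_exp_ofReal_mul_I _

section FourierSum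

variable {Ω : Type*} [MeasurableSpace Ω] {μ : Measure Ω} {Y Z : ℤ → Ω → ℝ}

theorem integrable_norm_sq_fourierSum_mul (hY4 : ∀ t, MemLp (Y t) 4 μ)
    (hZ4 : ∀ t, MemLp (Z t) 4 μ) (T : ℕ) (θ : ℝ) :
    Integrable (fun x => ‖fourierSum T Y θ x * fourierSum T Z (-θ) x‖ ^ 2) μ :=
  integrable_norm_sq_sum_mul_sum (a := fun t : ℕ => Y t) (b := fun t : ℕ => Z t) _ _ _
    fun _ _ _ _ => integrable_mul_mul_mul_of_memLp_four (hY4 _) (hZ4 _) (hY4 _) (hZ4 _)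

theorem integral_norm_sq_fourierSum_mul_le (hY4 : ∀ t, MemLp (Y t) 4 μ)
    (hZ4 : ∀ t, MemLp (Z t) 4 μ)
    (hstat : ∀ u₁ u₂ u₃ u₄ : ℤ, ∫ x, Y u₁ x * Z u₂ x * Y u₃ x * Z u₄ x ∂μ
      = ∫ x, Y (u₁ - u₄) x * Z (u₂ - u₄) x * Y (u₃ - u₄) x * Z 0 x ∂μ)
    (hsum : Summable fun u : ℤ × ℤ × ℤ => |∫ x, Y u.1 x * Z u.2.1 x * Y u.2.2 x * Z 0 x ∂μ|)
    (T : ℕ) (θ : ℝ) :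
    ∫ x, ‖fourierSum T Y θ x * fourierSum T Z (-θ) x‖ ^ 2 ∂μ ≤
      T * ∑' u : ℤ × ℤ × ℤ, |∫ x, Y u.1 x * Z u.2.1 x * Y u.2.2 x * Z 0 x ∂μ| := by
  calc ∫ x, ‖fourierSum T Y θ x * fourierSum T Z (-θ) x‖ ^ 2 ∂μ
      ≤ ∑ q ∈ range T ×ˢ range T ×ˢ range T ×ˢ range T,
          |∫ x, Y q.1 x * Z q.2.1 x * Y q.2.2.1 x * Z q.2.2.2 x ∂μ| :=
        integral_norm_sq_sum_mul_sum_le (a := fun t : ℕ => Y t) (b := fun t : ℕ => Z t) _ _ _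
          (fun _ _ _ _ => integrable_mul_mul_mul_of_memLp_four (hY4 _) (hZ4 _) (hY4 _) (hZ4 _))
          (fun _ => (norm_exp_neg_I_mul_mul_natCast _ _).le)
          (fun _ => (norm_exp_neg_I_mul_mul_natCast _ _).le)
    _ = ∑ q ∈ range T ×ˢ range T ×ˢ range T ×ˢ range T,
          |∫ x, Y ((q.1 : ℤ) - q.2.2.2) x * Z ((q.2.1 : ℤ) - q.2.2.2) x *
            Y ((q.2.2.1 : ℤ) - q.2.2.2) x * Z 0 x ∂μ| :=
        sum_congr rfl fun q _ => by rw [hstat]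
    _ ≤ T * ∑' u : ℤ × ℤ × ℤ, |∫ x, Y u.1 x * Z u.2.1 x * Y u.2.2 x * Z 0 x ∂μ| := by
        simpa using sum_fourfold_sub_le_card_mul_tsum hsum (fun _ => abs_nonneg _) (range T)

end FourierSum

theorem periodogram_product_bound_general
    {Ω : Type*} [MeasureSpace Ω]
    (Y Z : ℤ → Ω → ℝ)
    (hY4 : ∀ t : ℤ, MemLp (Y t) 4) (hZ4 : ∀ t : ℤ, MemLp (Z t) 4)
    (hstat : ∀ u₁ u₂ u₃ u₄ : ℤ,
      (∫ x, Y u₁ x * Z u₂ x * Y u₃ x * Z u₄ x)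
        = ∫ x, Y (u₁ - u₄) x * Z (u₂ - u₄) x * Y (u₃ - u₄) x * Z 0 x)
    (T : ℕ)
    (Yt Zt : ℝ → Ω → ℂ)
    (hYt : ∀ (ω : ℝ) (x : Ω), Yt ω x = (1 / Real.sqrt (2 * π * T) : ℝ) *
      ∑ t ∈ Finset.range T, ((Y t x : ℂ) * Complex.exp (-(Complex.I * ω * t))))
    (hZt : ∀ (ω : ℝ) (x : Ω), Zt ω x = (1 / Real.sqrt (2 * π * T) : ℝ) *
      ∑ t ∈ Finset.range T, ((Z t x : ℂ) * Complex.exp (-(Complex.I * ω * t))))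
    (p : ℝ → Ω → ℂ)
    (hp : ∀ (ω : ℝ) (x : Ω), p ω x = Yt ω x * Zt (-ω) x)
    (Q : ℝ)
    (hQsum : Summable fun t : ℤ × ℤ × ℤ =>
      |∫ x, Y t.1 x * Z t.2.1 x * Y t.2.2 x * Z 0 x|)
    (hQ : Q = ∑' t : ℤ × ℤ × ℤ, |∫ x, Y t.1 x * Z t.2.1 x * Y t.2.2 x * Z 0 x|) :
    ∀ ω lam : ℝ,
      (∫ x, ‖p ω x * p lam x‖) ≤ 7 * Q / ((2 * π) ^ 2 * T) := by
  intro ω lam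
  have hpF : ∀ θ x, ‖p θ x‖ ^ 2 =
      (2 * π * T)⁻¹ ^ 2 * ‖fourierSum T Y θ x * fourierSum T Z (-θ) x‖ ^ 2 := fun θ x => by
    rw [hp, hYt, hZt, ← fourierSum, ← fourierSum, mul_mul_mul_comm, norm_mul, mul_pow,
      norm_mul, Complex.norm_real, Real.norm_eq_abs, abs_mul_abs_self, one_div, ← mul_inv,
      mul_self_sqrt (by positivity)]
  have hint : ∀ θ, Integrable (fun x => ‖p θ x‖ ^ 2) := fun θ => by
    simp_rw [hpF]
    exact (integrable_norm_sq_fourierSum_mul hY4 hZ4 T θ).const_mul _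
  have hbound : ∀ θ, ∫ x, ‖p θ x‖ ^ 2 ≤ Q / ((2 * π) ^ 2 * T) := fun θ => by
    simp_rw [hpF]
    rw [integral_const_mul]
    calc _ ≤ (2 * π * T)⁻¹ ^ 2 * (T * Q) := by
          gcongr
          exact hQ ▸ integral_norm_sq_fourierSum_mul_le hY4 hZ4 hstat hQsum T θ
      _ = Q / ((2 * π) ^ 2 * T) := by
          rcases eq_or_ne (T : ℝ) 0 with hT | hT
          · simp [hT]
          · field_simp
  have hQ₀ : 0 ≤ Q := hQ ▸ tsum_nonneg fun _ => abs_nonneg _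
  calc ∫ x, ‖p ω x * p lam x‖
      ≤ Q / ((2 * π) ^ 2 * T) :=
        integral_norm_mul_le_of_integral_norm_sq_le (hint ω) (hint lam) (hbound ω) (hbound lam)
    _ ≤ 7 * Q / ((2 * π) ^ 2 * T) := by gcongr; linarith

/-- Let `(Y t)` and `(Z t)` be real random variables with finite fourth moments and jointly
fourth-order stationary mixed moments.  With the discrete Fourier transforms
`Ỹ_ω = (2πT)^{-1/2} ∑_{t=0}^{T-1} Y_t e^{-iωt}`, `Z̃_ω = (2πT)^{-1/2} ∑_{t=0}^{T-1} Z_t e^{-iωt}`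
and the periodogram `p_ω = Ỹ_ω Z̃_{-ω}`, for every `T ≥ 1` and all frequencies `ω, λ ∈ ℝ`,
`E|p_ω p_λ| ≤ 7 Q / ((2π)² T)`, where `Q = ∑_{t₁,t₂,t₃ ∈ ℤ} |E[Y_{t₁} Z_{t₂} Y_{t₃} Z_0]|`
is assumed finite. -/
theorem periodogram_product_bound
    {Ω : Type*} [MeasureSpace Ω] [IsProbabilityMeasure (volume : Measure Ω)]
    (Y Z : ℤ → Ω → ℝ)
    (hYmeas : ∀ t : ℤ, Measurable (Y t)) (hZmeas : ∀ t : ℤ, Measurable (Z t))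
    (hY4 : ∀ t : ℤ, MemLp (Y t) 4) (hZ4 : ∀ t : ℤ, MemLp (Z t) 4)
    (hstat : ∀ u₁ u₂ u₃ u₄ : ℤ,
      (∫ x, Y u₁ x * Z u₂ x * Y u₃ x * Z u₄ x)
        = ∫ x, Y (u₁ - u₄) x * Z (u₂ - u₄) x * Y (u₃ - u₄) x * Z 0 x)
    (T : ℕ) (hT : 1 ≤ T)
    (Yt Zt : ℝ → Ω → ℂ)
    (hYt : ∀ (ω : ℝ) (x : Ω), Yt ω x = (1 / Real.sqrt (2 * π * T) : ℝ) *
      ∑ t ∈ Finset.range T, ((Y t x : ℂ) * Complex.exp (-(Complex.I * ω * t))))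
    (hZt : ∀ (ω : ℝ) (x : Ω), Zt ω x = (1 / Real.sqrt (2 * π * T) : ℝ) *
      ∑ t ∈ Finset.range T, ((Z t x : ℂ) * Complex.exp (-(Complex.I * ω * t))))
    (p : ℝ → Ω → ℂ)
    (hp : ∀ (ω : ℝ) (x : Ω), p ω x = Yt ω x * Zt (-ω) x)
    (Q : ℝ)
    (hQsum : Summable fun t : ℤ × ℤ × ℤ =>
      |∫ x, Y t.1 x * Z t.2.1 x * Y t.2.2 x * Z 0 x|)
    (hQ : Q = ∑' t : ℤ × ℤ × ℤ, |∫ x, Y t.1 x * Z t.2.1 x * Y t.2.2 x * Z 0 x|) :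
    ∀ ω lam : ℝ,
      (∫ x, ‖p ω x * p lam x‖) ≤ 7 * Q / ((2 * π) ^ 2 * T) :=
  periodogram_product_bound_general Y Z hY4 hZ4 hstat T Yt Zt hYt hZt p hp Q hQsum hQ
end
end

section
/- For every T ≥ 1 and every ω ∈ ℝ, the second moment of the periodogram satisfies E|p_ω|² = E[Ỹ_ω Z̃_{−ω} Ỹ_{−ω} Z̃_ω] ≤ 7Q / ((2π)² T), where Q := ∑_{t₁,t₂,t₃∈ℤ} |E[Y_{t₁} Z_{t₂} Y_{t₃} Z_0]| is assumed finite. -/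
/-!
The transform of a real sequence satisfies `conj Ỹ_ω = Ỹ_{-ω}`, so
`|p_ω|² = Ỹ_ω Z̃_{-ω} Ỹ_{-ω} Z̃_ω`. Expanding the four transforms writes its expectation as `(2πT)⁻²`
times a sum over `[0, T)⁴` of unimodular phases times the fourth moments
`E[Y_{t₁} Z_{t₂} Y_{t₃} Z_{t₄}]`. By stationarity such a moment only depends on the differences
`tᵢ - t₄`, so for each of the `T` values of `t₄` the remaining triple sum of absolute moments is a
finite subsum of the series `Q`. Hence `E|p_ω|² ≤ T Q / (2πT)² = Q / ((2π)² T)`.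
-/

open MeasureTheory Real

noncomputable section

open Finset ComplexConjugate

theorem MeasureTheory.MemLp.integrable_mul_mul_mul {Ω : Type*} [MeasurableSpace Ω]
    {μ : Measure Ω} {a b c d : Ω → ℝ} (ha : MemLp a 4 μ) (hb : MemLp b 4 μ) (hc : MemLp c 4 μ)
    (hd : MemLp d 4 μ) : Integrable (fun x => a x * b x * c x * d x) μ := by
  have : ENNReal.HolderTriple 4 4 2 := ⟨by
    rw [← one_div, ← one_div, ENNReal.div_add_div_same, ENNReal.div_eq_div_iff] <;> norm_num⟩
  have hab : MemLp (fun x => a x * b x) 2 μ := hb.mul' ha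
  have hcd : MemLp (fun x => c x * d x) 2 μ := hd.mul' hc
  simpa only [Pi.mul_def, mul_assoc] using hab.integrable_mul hcd

theorem sum_abs_le_mul_tsum_of_shift_invariant {m : ℤ → ℤ → ℤ → ℤ → ℝ}
    (hm : ∀ u₁ u₂ u₃ u₄, m u₁ u₂ u₃ u₄ = m (u₁ - u₄) (u₂ - u₄) (u₃ - u₄) 0)
    (hsum : Summable fun s : ℤ × ℤ × ℤ => |m s.1 s.2.1 s.2.2 0|) (T : ℕ) :
    ∑ t ∈ range T ×ˢ range T ×ˢ range T ×ˢ range T, |m t.1 t.2.1 t.2.2.1 t.2.2.2|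
      ≤ T * ∑' s : ℤ × ℤ × ℤ, |m s.1 s.2.1 s.2.2 0| := by
  set R := range T ×ˢ range T ×ˢ range T ×ˢ range T
  let shift : ℕ × ℕ × ℕ × ℕ → ℤ × ℤ × ℤ := fun t =>
    ((t.1 : ℤ) - t.2.2.2, (t.2.1 : ℤ) - t.2.2.2, (t.2.2.1 : ℤ) - t.2.2.2)
  have hfiber : ∀ u ∈ range T, ∑ t ∈ R with t.2.2.2 = u, |m t.1 t.2.1 t.2.2.1 t.2.2.2|
      ≤ ∑' s : ℤ × ℤ × ℤ, |m s.1 s.2.1 s.2.2 0| := by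
    intro u _
    have hinj : Set.InjOn shift ↑({t ∈ R | t.2.2.2 = u}) := by
      rintro ⟨t₁, t₂, t₃, t₄⟩ ht ⟨t₁', t₂', t₃', t₄'⟩ ht' h
      simp only [coe_filter, Set.mem_ofPred_eq, shift, Prod.mk.injEq] at ht ht' h
      simp only [Prod.mk.injEq]
      omega
    calc ∑ t ∈ R with t.2.2.2 = u, |m t.1 t.2.1 t.2.2.1 t.2.2.2|
        = ∑ s ∈ {t ∈ R | t.2.2.2 = u}.image shift, |m s.1 s.2.1 s.2.2 0| := by
          rw [sum_image hinj]
          exact sum_congr rfl fun t _ => by rw [hm]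
      _ ≤ _ := hsum.sum_le_tsum _ fun _ _ => abs_nonneg _
  calc ∑ t ∈ R, |m t.1 t.2.1 t.2.2.1 t.2.2.2|
      = ∑ u ∈ range T, ∑ t ∈ R with t.2.2.2 = u, |m t.1 t.2.1 t.2.2.1 t.2.2.2| :=
        (sum_fiberwise_of_maps_to (fun t ht => by simp_all [R]) _).symm
    _ ≤ ∑ _u ∈ range T, ∑' s : ℤ × ℤ × ℤ, |m s.1 s.2.1 s.2.2 0| := sum_le_sum hfiber
    _ = T * ∑' s : ℤ × ℤ × ℤ, |m s.1 s.2.1 s.2.2 0| := by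
        rw [sum_const, card_range, nsmul_eq_mul]

namespace Periodogram

def dft (T : ℕ) (a : ℕ → ℝ) (ω : ℝ) : ℂ :=
  (1 / Real.sqrt (2 * π * T) : ℝ) *
    ∑ t ∈ range T, ((a t : ℂ) * Complex.exp (-(Complex.I * ω * t)))

theorem conj_dft (T : ℕ) (a : ℕ → ℝ) (ω : ℝ) : conj (dft T a ω) = dft T a (-ω) := by
  simp only [dft, map_mul, map_sum, Complex.conj_ofReal, ← Complex.exp_conj, map_neg,
    Complex.conj_I, Complex.conj_natCast, Complex.ofReal_neg]
  congr 1
  refine sum_congr rfl fun t _ => ?_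
  ring_nf

theorem norm_exp_neg_I_mul_mul (ω : ℝ) (t : ℕ) : ‖Complex.exp (-(Complex.I * ω * t))‖ = 1 := by
  rw [Complex.norm_exp]
  simp

theorem dft_mul_dft_mul_dft_mul_dft (T : ℕ) (a b c d : ℕ → ℝ) (ω₁ ω₂ ω₃ ω₄ : ℝ) :
    dft T a ω₁ * dft T b ω₂ * dft T c ω₃ * dft T d ω₄
      = ((1 / (2 * π * T) ^ 2 : ℝ) : ℂ) *
        ∑ t ∈ range T ×ˢ range T ×ˢ range T ×ˢ range T,
          (Complex.exp (-(Complex.I * ω₁ * t.1)) * Complex.exp (-(Complex.I * ω₂ * t.2.1))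
            * Complex.exp (-(Complex.I * ω₃ * t.2.2.1)) * Complex.exp (-(Complex.I * ω₄ * t.2.2.2)))
          * ((a t.1 * b t.2.1 * c t.2.2.1 * d t.2.2.2 : ℝ) : ℂ) := by
  have hnorm : ((1 / Real.sqrt (2 * π * T)) ^ 4 : ℝ) = 1 / (2 * π * T) ^ 2 := by
    rw [div_pow, one_pow, show 4 = 2 * 2 from rfl, pow_mul, Real.sq_sqrt (by positivity)]
  have hassoc : dft T a ω₁ * dft T b ω₂ * dft T c ω₃ * dft T d ω₄
      = ((1 / (2 * π * T) ^ 2 : ℝ) : ℂ) *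
        ((∑ t ∈ range T, (a t : ℂ) * Complex.exp (-(Complex.I * ω₁ * t))) *
          ((∑ t ∈ range T, (b t : ℂ) * Complex.exp (-(Complex.I * ω₂ * t))) *
            ((∑ t ∈ range T, (c t : ℂ) * Complex.exp (-(Complex.I * ω₃ * t))) *
              ∑ t ∈ range T, (d t : ℂ) * Complex.exp (-(Complex.I * ω₄ * t))))) := by
    rw [← hnorm, dft, dft, dft, dft]
    push_cast
    ring
  rw [hassoc, sum_mul_sum, sum_mul_sum, sum_mul_sum]
  simp only [mul_sum, sum_product]
  refine sum_congr rfl fun t₁ _ => sum_congr rfl fun t₂ _ =>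
    sum_congr rfl fun t₃ _ => sum_congr rfl fun t₄ _ => ?_
  push_cast
  ring

theorem norm_integral_dft_mul_dft_mul_dft_mul_dft_le {Ω : Type*} [MeasurableSpace Ω]
    {μ : Measure Ω} (T : ℕ) (a b c d : ℕ → Ω → ℝ)
    (hint : ∀ t₁ t₂ t₃ t₄, Integrable (fun x => a t₁ x * b t₂ x * c t₃ x * d t₄ x) μ)
    (ω₁ ω₂ ω₃ ω₄ : ℝ) :
    ‖∫ x, dft T (a · x) ω₁ * dft T (b · x) ω₂ * dft T (c · x) ω₃ * dft T (d · x) ω₄ ∂μ‖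
      ≤ (∑ t ∈ range T ×ˢ range T ×ˢ range T ×ˢ range T,
          |∫ x, a t.1 x * b t.2.1 x * c t.2.2.1 x * d t.2.2.2 x ∂μ|) / (2 * π * T) ^ 2 := by
  simp only [dft_mul_dft_mul_dft_mul_dft]
  rw [integral_const_mul, integral_finsetSum _ fun t _ => ((hint _ _ _ _).ofReal.const_mul _)]
  simp only [integral_const_mul]
  refine (norm_mul_le _ _).trans ?_
  rw [Complex.norm_real, Real.norm_of_nonneg (by positivity), one_div_mul_eq_div]
  gcongr
  refine (norm_sum_le _ _).trans_eq (sum_congr rfl fun t _ => ?_)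
  simp only [norm_mul, norm_exp_neg_I_mul_mul, one_mul]
  rw [integral_complex_ofReal, Complex.norm_real, Real.norm_eq_abs]

end Periodogram

theorem periodogram_second_moment_bound_general
    {Ω : Type*} [MeasureSpace Ω]
    (Y Z : ℤ → Ω → ℝ)
    (hY4 : ∀ t : ℤ, MemLp (Y t) 4) (hZ4 : ∀ t : ℤ, MemLp (Z t) 4)
    (hstat : ∀ u₁ u₂ u₃ u₄ : ℤ,
      (∫ x, Y u₁ x * Z u₂ x * Y u₃ x * Z u₄ x)
        = ∫ x, Y (u₁ - u₄) x * Z (u₂ - u₄) x * Y (u₃ - u₄) x * Z 0 x)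
    (T : ℕ) (hT : 1 ≤ T)
    (Yt Zt : ℝ → Ω → ℂ)
    (hYt : ∀ (ω : ℝ) (x : Ω), Yt ω x = (1 / Real.sqrt (2 * π * T) : ℝ) *
      ∑ t ∈ Finset.range T, ((Y t x : ℂ) * Complex.exp (-(Complex.I * ω * t))))
    (hZt : ∀ (ω : ℝ) (x : Ω), Zt ω x = (1 / Real.sqrt (2 * π * T) : ℝ) *
      ∑ t ∈ Finset.range T, ((Z t x : ℂ) * Complex.exp (-(Complex.I * ω * t))))
    (p : ℝ → Ω → ℂ)
    (hp : ∀ (ω : ℝ) (x : Ω), p ω x = Yt ω x * Zt (-ω) x)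
    (Q : ℝ)
    (hQsum : Summable fun t : ℤ × ℤ × ℤ =>
      |∫ x, Y t.1 x * Z t.2.1 x * Y t.2.2 x * Z 0 x|)
    (hQ : Q = ∑' t : ℤ × ℤ × ℤ, |∫ x, Y t.1 x * Z t.2.1 x * Y t.2.2 x * Z 0 x|) :
    ∀ ω : ℝ,
      ((∫ x, ‖p ω x‖ ^ 2 : ℝ) : ℂ)
          = (∫ x, Yt ω x * Zt (-ω) x * Yt (-ω) x * Zt ω x)
      ∧ (∫ x, ‖p ω x‖ ^ 2) ≤ 7 * Q / ((2 * π) ^ 2 * T) := by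
  intro ω
  have hY : ∀ ω x, Yt ω x = Periodogram.dft T (Y · x) ω := hYt
  have hZ : ∀ ω x, Zt ω x = Periodogram.dft T (Z · x) ω := hZt
  have hmoment : ((∫ x, ‖p ω x‖ ^ 2 : ℝ) : ℂ)
      = ∫ x, Yt ω x * Zt (-ω) x * Yt (-ω) x * Zt ω x := by
    rw [← integral_complex_ofReal]
    refine integral_congr_ae (ae_of_all _ fun x => ?_)
    dsimp only
    rw [hp, Complex.sq_norm, ← Complex.mul_conj, map_mul]
    simp only [hY, hZ, Periodogram.conj_dft, neg_neg]
    ring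
  refine ⟨hmoment, ?_⟩
  have hQ0 : 0 ≤ Q := hQ ▸ tsum_nonneg fun _ => abs_nonneg _
  have hT0 : (T : ℝ) ≠ 0 := Nat.cast_ne_zero.mpr (Nat.one_le_iff_ne_zero.mp hT)
  calc (∫ x, ‖p ω x‖ ^ 2)
      ≤ ‖∫ x, Yt ω x * Zt (-ω) x * Yt (-ω) x * Zt ω x‖ := by
        rw [← hmoment, Complex.norm_real, Real.norm_eq_abs]
        exact le_abs_self _
    _ ≤ (∑ t ∈ range T ×ˢ range T ×ˢ range T ×ˢ range T,
          |∫ x, Y t.1 x * Z t.2.1 x * Y t.2.2.1 x * Z t.2.2.2 x|) / (2 * π * T) ^ 2 := by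
        simp only [hY, hZ]
        exact Periodogram.norm_integral_dft_mul_dft_mul_dft_mul_dft_le T (fun t : ℕ => Y t)
          (fun t : ℕ => Z t) (fun t : ℕ => Y t) (fun t : ℕ => Z t)
          (fun t₁ t₂ t₃ t₄ => (hY4 t₁).integrable_mul_mul_mul (hZ4 t₂) (hY4 t₃) (hZ4 t₄))
          ω (-ω) (-ω) ω
    _ ≤ T * Q / (2 * π * T) ^ 2 := by
        gcongr
        rw [hQ]
        exact sum_abs_le_mul_tsum_of_shift_invariant hstat hQsum T
    _ = Q / ((2 * π) ^ 2 * T) := by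
        field_simp
    _ ≤ 7 * Q / ((2 * π) ^ 2 * T) := by
        gcongr
        linarith

/-- Let `(Y t)` and `(Z t)` be real random variables with finite fourth moments and jointly
fourth-order stationary mixed moments, `Ỹ_ω, Z̃_ω` their discrete Fourier transforms and
`p_ω = Ỹ_ω Z̃_{-ω}` the periodogram.  For every `T ≥ 1` and `ω ∈ ℝ`, the second moment of
the periodogram satisfies `E|p_ω|² = E[Ỹ_ω Z̃_{-ω} Ỹ_{-ω} Z̃_ω] ≤ 7 Q / ((2π)² T)`, where
`Q = ∑_{t₁,t₂,t₃ ∈ ℤ} |E[Y_{t₁} Z_{t₂} Y_{t₃} Z_0]|` is assumed finite. -/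
theorem periodogram_second_moment_bound
    {Ω : Type*} [MeasureSpace Ω] [IsProbabilityMeasure (volume : Measure Ω)]
    (Y Z : ℤ → Ω → ℝ)
    (hYmeas : ∀ t : ℤ, Measurable (Y t)) (hZmeas : ∀ t : ℤ, Measurable (Z t))
    (hY4 : ∀ t : ℤ, MemLp (Y t) 4) (hZ4 : ∀ t : ℤ, MemLp (Z t) 4)
    (hstat : ∀ u₁ u₂ u₃ u₄ : ℤ,
      (∫ x, Y u₁ x * Z u₂ x * Y u₃ x * Z u₄ x)
        = ∫ x, Y (u₁ - u₄) x * Z (u₂ - u₄) x * Y (u₃ - u₄) x * Z 0 x)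
    (T : ℕ) (hT : 1 ≤ T)
    (Yt Zt : ℝ → Ω → ℂ)
    (hYt : ∀ (ω : ℝ) (x : Ω), Yt ω x = (1 / Real.sqrt (2 * π * T) : ℝ) *
      ∑ t ∈ Finset.range T, ((Y t x : ℂ) * Complex.exp (-(Complex.I * ω * t))))
    (hZt : ∀ (ω : ℝ) (x : Ω), Zt ω x = (1 / Real.sqrt (2 * π * T) : ℝ) *
      ∑ t ∈ Finset.range T, ((Z t x : ℂ) * Complex.exp (-(Complex.I * ω * t))))
    (p : ℝ → Ω → ℂ)
    (hp : ∀ (ω : ℝ) (x : Ω), p ω x = Yt ω x * Zt (-ω) x)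
    (Q : ℝ)
    (hQsum : Summable fun t : ℤ × ℤ × ℤ =>
      |∫ x, Y t.1 x * Z t.2.1 x * Y t.2.2 x * Z 0 x|)
    (hQ : Q = ∑' t : ℤ × ℤ × ℤ, |∫ x, Y t.1 x * Z t.2.1 x * Y t.2.2 x * Z 0 x|) :
    ∀ ω : ℝ,
      ((∫ x, ‖p ω x‖ ^ 2 : ℝ) : ℂ)
          = (∫ x, Yt ω x * Zt (-ω) x * Yt (-ω) x * Zt ω x)
      ∧ (∫ x, ‖p ω x‖ ^ 2) ≤ 7 * Q / ((2 * π) ^ 2 * T) :=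
  periodogram_second_moment_bound_general Y Z hY4 hZ4 hstat T hT Yt Zt hYt hZt p hp Q hQsum hQ
end
end

section
/- Define S_{T,1} := (1/T) ∑_{k=1}^{⌊T/2⌋} ( p_{ω_k} + conj(p_{ω_k}) ) with Fourier frequencies ω_k := 2πk/T. Then for every T ≥ 1, √T · E[ S_{T,1} · conj(S_{T,1}) ] = √T · E|S_{T,1}|² ≤ 7Q / (2π)², where Q := ∑_{t₁,t₂,t₃∈ℤ} |E[Y_{t₁} Z_{t₂} Y_{t₃} Z_0]| is assumed finite. -/
/-!
Since `p + conj p = 2 Re p`, the statistic `S_{T,1}` is real and equals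
`∑_{t,s<T} K_T(t,s) Y_t Z_s` with the cosine kernel
`K_T(t,s) = (πT²)⁻¹ ∑_{k=1}^{⌊T/2⌋} cos(ω_k (s - t))`, which is bounded by `(2πT)⁻¹`.
Expanding the square, `E S² ≤ (2πT)⁻² ∑_{t,s,t',s'<T} |E[Y_t Z_s Y_t' Z_s']|`. By stationarity the
sum over `t, s, t'` for fixed `s'` is a sum of distinct terms of the series defining `Q`, so
`E S² ≤ Q / (4π²T)`, and `√T ≤ T` finishes the bound.
-/

open MeasureTheory Real Finset
open scoped ComplexConjugate

noncomputable section

theorem MeasureTheory.MemLp.integrable_mul_mul_mul_s13 {α 𝕜 : Type*} [MeasurableSpace α]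
    [NormedRing 𝕜] {μ : Measure α} {f g h k : α → 𝕜} (hf : MemLp f 4 μ) (hg : MemLp g 4 μ)
    (hh : MemLp h 4 μ) (hk : MemLp k 4 μ) : Integrable (fun x => f x * g x * (h x * k x)) μ := by
  have : ENNReal.HolderTriple 4 4 2 := ⟨by
    rw [← two_mul, show (4 : ENNReal) = 2 * 2 by norm_num, ENNReal.mul_inv (by simp) (by simp),
      ← mul_assoc, ENNReal.mul_inv_cancel (by simp) (by simp), one_mul]⟩
  exact (hg.mul' hf : MemLp _ 2 μ).integrable_mul (hk.mul' hh : MemLp _ 2 μ)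

def dft (T : ℕ) (a : ℕ → ℝ) (ω : ℝ) : ℂ :=
  (1 / √(2 * π * T) : ℝ) * ∑ t ∈ range T, (a t : ℂ) * Complex.exp (-(Complex.I * ω * t))

theorem dft_mul_dft_neg (T : ℕ) (a b : ℕ → ℝ) (ω : ℝ) :
    dft T a ω * dft T b (-ω) = ((2 * π * T)⁻¹ : ℝ) *
      ∑ t ∈ range T, ∑ s ∈ range T,
        ((a t * b s : ℝ) : ℂ) * Complex.exp ((ω * (s - t) : ℝ) * Complex.I) := by
  have hnorm : (1 / √(2 * π * T)) * (1 / √(2 * π * T)) = (2 * π * T)⁻¹ := by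
    rw [one_div_mul_one_div, Real.mul_self_sqrt (by positivity), one_div]
  rw [dft, dft, mul_mul_mul_comm, ← Complex.ofReal_mul, hnorm, sum_mul_sum]
  congr 1
  refine sum_congr rfl fun t _ => sum_congr rfl fun s _ => ?_
  rw [mul_mul_mul_comm, ← Complex.exp_add]
  push_cast
  ring_nf

theorem dft_mul_dft_neg_add_conj (T : ℕ) (a b : ℕ → ℝ) (ω : ℝ) :
    dft T a ω * dft T b (-ω) + conj (dft T a ω * dft T b (-ω)) =
      ((π * T)⁻¹ * ∑ t ∈ range T, ∑ s ∈ range T, a t * b s * cos (ω * (s - t)) : ℝ) := by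
  rw [Complex.add_conj, dft_mul_dft_neg, Complex.re_ofReal_mul]
  simp only [Complex.re_sum, Complex.re_ofReal_mul, Complex.exp_ofReal_mul_I_re]
  ring_nf

def periodogramKernel (T t s : ℕ) : ℝ :=
  (π * T ^ 2)⁻¹ * ∑ k ∈ Icc 1 (T / 2), cos (2 * π * k / T * (s - t))

theorem sum_periodogram_add_conj (T : ℕ) (a b : ℕ → ℝ) :
    (1 / (T : ℂ)) * ∑ k ∈ Icc 1 (T / 2),
      (dft T a (2 * π * k / T) * dft T b (-(2 * π * k / T)) +
        conj (dft T a (2 * π * k / T) * dft T b (-(2 * π * k / T)))) =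
      (∑ q ∈ range T ×ˢ range T, periodogramKernel T q.1 q.2 * (a q.1 * b q.2) : ℝ) := by
  simp only [dft_mul_dft_neg_add_conj, ← Complex.ofReal_sum, one_div, ← Complex.ofReal_natCast,
    ← Complex.ofReal_inv, ← Complex.ofReal_mul]
  congr 1
  simp only [sum_product, periodogramKernel, mul_sum, sum_mul]
  rw [sum_comm]
  refine sum_congr rfl fun t _ => ?_
  rw [sum_comm]
  refine sum_congr rfl fun s _ => sum_congr rfl fun k _ => ?_
  ring

theorem abs_periodogramKernel_le (T t s : ℕ) : |periodogramKernel T t s| ≤ (2 * π * T)⁻¹ := by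
  rcases Nat.eq_zero_or_pos T with rfl | hT
  · simp [periodogramKernel]
  have hsum : |∑ k ∈ Icc 1 (T / 2), cos (2 * π * k / T * (s - t))| ≤ (T : ℝ) / 2 :=
    calc |∑ k ∈ Icc 1 (T / 2), cos (2 * π * k / T * (s - t))|
        ≤ ∑ k ∈ Icc 1 (T / 2), |cos (2 * π * k / T * (s - t))| := abs_sum_le_sum_abs _ _
      _ ≤ ∑ k ∈ Icc 1 (T / 2), (1 : ℝ) := sum_le_sum fun k _ => abs_cos_le_one _
      _ = ((T / 2 : ℕ) : ℝ) := by simp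
      _ ≤ (T : ℝ) / 2 := Nat.cast_div_le
  rw [periodogramKernel, abs_mul, abs_of_pos (by positivity)]
  calc (π * T ^ 2)⁻¹ * |∑ k ∈ Icc 1 (T / 2), cos (2 * π * k / T * (s - t))|
      ≤ (π * T ^ 2)⁻¹ * (T / 2) := by gcongr
    _ = (2 * π * T)⁻¹ := by field_simp

section SecondMoment

variable {ι Ω : Type*} [MeasurableSpace Ω] {μ : Measure Ω}

theorem integral_sq_sum_mul_le (s : Finset ι) (c : ι → ℝ) (X : ι → Ω → ℝ) {M : ℝ}
    (hc : ∀ i ∈ s, |c i| ≤ M) (hX : ∀ i ∈ s, ∀ j ∈ s, Integrable (fun x => X i x * X j x) μ) :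
    ∫ x, (∑ i ∈ s, c i * X i x) ^ 2 ∂μ ≤ M ^ 2 * ∑ i ∈ s, ∑ j ∈ s, |∫ x, X i x * X j x ∂μ| := by
  have hexpand : ∀ x, (∑ i ∈ s, c i * X i x) ^ 2 =
      ∑ i ∈ s, ∑ j ∈ s, c i * c j * (X i x * X j x) := fun x => by
    rw [sq, sum_mul_sum]
    exact sum_congr rfl fun i _ => sum_congr rfl fun j _ => by ring
  have hcc : ∀ i ∈ s, ∀ j ∈ s, |c i * c j| ≤ M ^ 2 := fun i hi j hj => by
    rw [abs_mul, sq]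
    exact mul_le_mul (hc i hi) (hc j hj) (abs_nonneg _) ((abs_nonneg _).trans (hc i hi))
  calc ∫ x, (∑ i ∈ s, c i * X i x) ^ 2 ∂μ
      = ∑ i ∈ s, ∑ j ∈ s, c i * c j * ∫ x, X i x * X j x ∂μ := by
        simp_rw [hexpand]
        rw [integral_finsetSum _ fun i hi => integrable_finsetSum _ fun j hj =>
          (hX i hi j hj).const_mul _]
        refine sum_congr rfl fun i hi => ?_
        rw [integral_finsetSum _ fun j hj => (hX i hi j hj).const_mul _]
        exact sum_congr rfl fun j _ => integral_const_mul _ _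
    _ ≤ ∑ i ∈ s, ∑ j ∈ s, M ^ 2 * |∫ x, X i x * X j x ∂μ| :=
        sum_le_sum fun i hi => sum_le_sum fun j hj => by
          calc c i * c j * ∫ x, X i x * X j x ∂μ
              ≤ |c i * c j| * |∫ x, X i x * X j x ∂μ| := by rw [← abs_mul]; exact le_abs_self _
            _ ≤ M ^ 2 * |∫ x, X i x * X j x ∂μ| := by gcongr; exact hcc i hi j hj
    _ = M ^ 2 * ∑ i ∈ s, ∑ j ∈ s, |∫ x, X i x * X j x ∂μ| := by simp only [mul_sum]

end SecondMoment

theorem sum_abs_le_mul_tsum_of_stationary (m : ℤ → ℤ → ℤ → ℤ → ℝ)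
    (hstat : ∀ u₁ u₂ u₃ u₄, m u₁ u₂ u₃ u₄ = m (u₁ - u₄) (u₂ - u₄) (u₃ - u₄) 0)
    (hsum : Summable fun u : ℤ × ℤ × ℤ => |m u.1 u.2.1 u.2.2 0|) (T : ℕ) :
    ∑ q ∈ range T ×ˢ range T, ∑ q' ∈ range T ×ˢ range T, |m q.1 q.2 q'.1 q'.2| ≤
      T * ∑' u : ℤ × ℤ × ℤ, |m u.1 u.2.1 u.2.2 0| := by
  set f : ℤ × ℤ × ℤ → ℝ := fun u => |m u.1 u.2.1 u.2.2 0|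
  have hanchored : ∀ s' : ℕ,
      ∑ u ∈ range T ×ˢ range T ×ˢ range T, |m u.1 u.2.1 u.2.2 s'| ≤ ∑' u, f u := fun s' => by
    set e : ℕ × ℕ × ℕ → ℤ × ℤ × ℤ := fun u => (u.1 - s', u.2.1 - s', u.2.2 - s')
    have he : Function.Injective e := fun u v huv => by
      simp only [e, Prod.mk.injEq, sub_left_inj, Nat.cast_inj] at huv
      exact Prod.ext huv.1 (Prod.ext huv.2.1 huv.2.2)
    calc ∑ u ∈ range T ×ˢ range T ×ˢ range T, |m u.1 u.2.1 u.2.2 s'|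
        = ∑ u ∈ range T ×ˢ range T ×ˢ range T, f (e u) := sum_congr rfl fun u _ => by
          simp only [f, e, hstat _ _ _ (s' : ℤ)]
      _ ≤ ∑' u, f (e u) :=
          (hsum.comp_injective he).sum_le_tsum _ fun _ _ => abs_nonneg _
      _ ≤ ∑' u, f u := tsum_comp_le_tsum_of_inj hsum (fun _ => abs_nonneg _) he
  calc ∑ q ∈ range T ×ˢ range T, ∑ q' ∈ range T ×ˢ range T, |m q.1 q.2 q'.1 q'.2|
      = ∑ s' ∈ range T, ∑ u ∈ range T ×ˢ range T ×ˢ range T, |m u.1 u.2.1 u.2.2 s'| := by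
        rw [← sum_product', ← sum_product']
        exact sum_nbij' (fun q => (q.2.2, q.1.1, q.1.2, q.2.1))
          (fun v => ((v.2.1, v.2.2.1), (v.2.2.2, v.1))) (by simp +contextual) (by simp +contextual)
          (by simp) (by simp) (by simp)
    _ ≤ ∑ s' ∈ range T, ∑' u, f u := sum_le_sum fun s' _ => hanchored s'
    _ = T * ∑' u, f u := by rw [sum_const, card_range, nsmul_eq_mul]

theorem ST1_second_moment_bound_general
    {Ω : Type*} [MeasureSpace Ω]
    (Y Z : ℤ → Ω → ℝ)
    (hY4 : ∀ t : ℤ, MemLp (Y t) 4) (hZ4 : ∀ t : ℤ, MemLp (Z t) 4)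
    (hstat : ∀ u₁ u₂ u₃ u₄ : ℤ,
      (∫ x, Y u₁ x * Z u₂ x * Y u₃ x * Z u₄ x)
        = ∫ x, Y (u₁ - u₄) x * Z (u₂ - u₄) x * Y (u₃ - u₄) x * Z 0 x)
    (T : ℕ)
    (Yt Zt : ℝ → Ω → ℂ)
    (hYt : ∀ (ω : ℝ) (x : Ω), Yt ω x = (1 / Real.sqrt (2 * π * T) : ℝ) *
      ∑ t ∈ Finset.range T, ((Y t x : ℂ) * Complex.exp (-(Complex.I * ω * t))))
    (hZt : ∀ (ω : ℝ) (x : Ω), Zt ω x = (1 / Real.sqrt (2 * π * T) : ℝ) *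
      ∑ t ∈ Finset.range T, ((Z t x : ℂ) * Complex.exp (-(Complex.I * ω * t))))
    (p : ℝ → Ω → ℂ)
    (hp : ∀ (ω : ℝ) (x : Ω), p ω x = Yt ω x * Zt (-ω) x)
    (S1 : Ω → ℂ)
    (hS1 : ∀ x : Ω, S1 x = (1 / (T : ℂ)) *
      ∑ k ∈ Finset.Icc 1 (T / 2),
        (p (2 * π * k / T) x + conj (p (2 * π * k / T) x)))
    (Q : ℝ)
    (hQsum : Summable fun t : ℤ × ℤ × ℤ =>
      |∫ x, Y t.1 x * Z t.2.1 x * Y t.2.2 x * Z 0 x|)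
    (hQ : Q = ∑' t : ℤ × ℤ × ℤ, |∫ x, Y t.1 x * Z t.2.1 x * Y t.2.2 x * Z 0 x|) :
    ((Real.sqrt T : ℝ) : ℂ) * ∫ x, S1 x * conj (S1 x)
        = ((Real.sqrt T * ∫ x, ‖S1 x‖ ^ 2 : ℝ) : ℂ)
    ∧ Real.sqrt T * ∫ x, ‖S1 x‖ ^ 2 ≤ 7 * Q / (2 * π) ^ 2 := by
  have hp_dft : ∀ ω x, p ω x = dft T (fun t => Y t x) ω * dft T (fun t => Z t x) (-ω) :=
    fun ω x => by rw [hp, hYt, hZt]; rfl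
  have hS1_real : ∀ x, S1 x =
      (∑ q ∈ range T ×ˢ range T, periodogramKernel T q.1 q.2 * (Y q.1 x * Z q.2 x) : ℝ) :=
    fun x => by rw [hS1]; simp only [hp_dft]; exact sum_periodogram_add_conj T _ _
  have hQ0 : 0 ≤ Q := hQ ▸ tsum_nonneg fun _ => abs_nonneg _
  have hmoment : ∫ x, ‖S1 x‖ ^ 2 ≤ (2 * π * T)⁻¹ ^ 2 * (T * Q) := by
    simp only [hS1_real, Complex.norm_real, Real.norm_eq_abs, sq_abs]
    refine (integral_sq_sum_mul_le _ _ (fun (q : ℕ × ℕ) x => Y q.1 x * Z q.2 x)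
      (fun q _ => abs_periodogramKernel_le T q.1 q.2)
      (fun q _ q' _ => (hY4 _).integrable_mul_mul_mul_s13 (hZ4 _) (hY4 _) (hZ4 _))).trans ?_
    gcongr
    simpa only [hQ, mul_assoc] using sum_abs_le_mul_tsum_of_stationary
      (fun u₁ u₂ u₃ u₄ => ∫ x, Y u₁ x * Z u₂ x * Y u₃ x * Z u₄ x) hstat hQsum T
  refine ⟨?_, ?_⟩
  · simp_rw [Complex.mul_conj', ← Complex.ofReal_pow, integral_complex_ofReal]
    push_cast
    rfl
  calc √T * ∫ x, ‖S1 x‖ ^ 2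
      ≤ √T * ((2 * π * T)⁻¹ ^ 2 * (T * Q)) := by gcongr
    _ ≤ Q / (2 * π) ^ 2 := by
      rcases Nat.eq_zero_or_pos T with rfl | hT
      · simp only [CharP.cast_eq_zero, Real.sqrt_zero, zero_mul]; positivity
      have hsqrt : √T ≤ T := Real.sqrt_le_self_iff.2 (Or.inr (by exact_mod_cast hT))
      calc √T * ((2 * π * T)⁻¹ ^ 2 * (T * Q)) ≤ T * ((2 * π * T)⁻¹ ^ 2 * (T * Q)) := by gcongr
        _ = Q / (2 * π) ^ 2 := by field_simp
    _ ≤ 7 * Q / (2 * π) ^ 2 := by gcongr; linarith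

/-- Let `(Y t)` and `(Z t)` be real random variables with finite fourth moments and jointly
fourth-order stationary mixed moments, `Ỹ_ω, Z̃_ω` their discrete Fourier transforms,
`p_ω = Ỹ_ω Z̃_{-ω}` the periodogram, and
`S_{T,1} = (1/T) ∑_{k=1}^{⌊T/2⌋} (p_{ω_k} + conj p_{ω_k})` with `ω_k = 2πk/T`.  Then for
every `T ≥ 1`, `√T · E[S_{T,1} conj(S_{T,1})] = √T · E|S_{T,1}|² ≤ 7 Q / (2π)²`, where
`Q = ∑_{t₁,t₂,t₃ ∈ ℤ} |E[Y_{t₁} Z_{t₂} Y_{t₃} Z_0]|` is assumed finite. -/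
theorem ST1_second_moment_bound
    {Ω : Type*} [MeasureSpace Ω] [IsProbabilityMeasure (volume : Measure Ω)]
    (Y Z : ℤ → Ω → ℝ)
    (hYmeas : ∀ t : ℤ, Measurable (Y t)) (hZmeas : ∀ t : ℤ, Measurable (Z t))
    (hY4 : ∀ t : ℤ, MemLp (Y t) 4) (hZ4 : ∀ t : ℤ, MemLp (Z t) 4)
    (hstat : ∀ u₁ u₂ u₃ u₄ : ℤ,
      (∫ x, Y u₁ x * Z u₂ x * Y u₃ x * Z u₄ x)
        = ∫ x, Y (u₁ - u₄) x * Z (u₂ - u₄) x * Y (u₃ - u₄) x * Z 0 x)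
    (T : ℕ) (hT : 1 ≤ T)
    (Yt Zt : ℝ → Ω → ℂ)
    (hYt : ∀ (ω : ℝ) (x : Ω), Yt ω x = (1 / Real.sqrt (2 * π * T) : ℝ) *
      ∑ t ∈ Finset.range T, ((Y t x : ℂ) * Complex.exp (-(Complex.I * ω * t))))
    (hZt : ∀ (ω : ℝ) (x : Ω), Zt ω x = (1 / Real.sqrt (2 * π * T) : ℝ) *
      ∑ t ∈ Finset.range T, ((Z t x : ℂ) * Complex.exp (-(Complex.I * ω * t))))
    (p : ℝ → Ω → ℂ)
    (hp : ∀ (ω : ℝ) (x : Ω), p ω x = Yt ω x * Zt (-ω) x)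
    (S1 : Ω → ℂ)
    (hS1 : ∀ x : Ω, S1 x = (1 / (T : ℂ)) *
      ∑ k ∈ Finset.Icc 1 (T / 2),
        (p (2 * π * k / T) x + conj (p (2 * π * k / T) x)))
    (Q : ℝ)
    (hQsum : Summable fun t : ℤ × ℤ × ℤ =>
      |∫ x, Y t.1 x * Z t.2.1 x * Y t.2.2 x * Z 0 x|)
    (hQ : Q = ∑' t : ℤ × ℤ × ℤ, |∫ x, Y t.1 x * Z t.2.1 x * Y t.2.2 x * Z 0 x|) :
    ((Real.sqrt T : ℝ) : ℂ) * ∫ x, S1 x * conj (S1 x)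
        = ((Real.sqrt T * ∫ x, ‖S1 x‖ ^ 2 : ℝ) : ℂ)
    ∧ Real.sqrt T * ∫ x, ‖S1 x‖ ^ 2 ≤ 7 * Q / (2 * π) ^ 2 :=
  ST1_second_moment_bound_general Y Z hY4 hZ4 hstat T Yt Zt hYt hZt p hp S1 hS1 Q hQsum hQ
end
end
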